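/- For independent Uniform[0,1] p-values with m_0 true nulls out of m hypotheses, the Benjamini–Hochberg procedure at level α satisfies FDR = E[V/max(R,1)] ≤ (m_0/m)·α, where V is the number of true nulls rejected and R the total number of rejections. -/

import Mathlib

open MeasureTheory ProbabilityTheory

/-- The Benjamini–Hochberg cutoff `k*`: the largest `k ≤ m` such that the `k`-th order
statistic satisfies `p_(k) ≤ k α / m`, equivalently such that at least `k` of the
p-values are `≤ k α / m` (with `k* = 0` if no such `k ≥ 1` exists). -/
noncomputable def bhKstar (m : ℕ) (α : ℝ) (p : Fin m → ℝ) : ℕ :=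
  ((Finset.range (m + 1)).filter
    (fun k : ℕ => k ≤ (Finset.univ.filter (fun i : Fin m => p i ≤ (k : ℝ) * α / m)).card)).sup id

/-!
For a true null `i`, let `Rᵢ` be the BH cutoff computed after replacing `p i` by `0`. On the event
`p i ≤ k α / m` the cutoff equals `k` if and only if `Rᵢ` does, so the share
`1{p i ≤ R α / m} / max(R, 1)` of hypothesis `i` in `V / max(R, 1)` is the same function of
`(p i, Rᵢ)`. But `Rᵢ` depends only on the other p-values, so it is independent of `p i`, and
given `Rᵢ = k` the expected share is at most `(k α / m) / max(k, 1) ≤ α / m`. Summing over the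
`m₀` true nulls gives the bound.
-/

open Finset

section Cutoff

variable {m : ℕ} {α : ℝ}

lemma bhKstar_le_card (p : Fin m → ℝ) : bhKstar m α p ≤ #{i | p i ≤ bhKstar m α p * α / m} := by
  obtain ⟨k, hk, hsup⟩ := exists_mem_eq_sup
    ((range (m + 1)).filter (fun k : ℕ => k ≤ #{i | p i ≤ k * α / m})) ⟨0, by simp⟩ id
  unfold bhKstar
  rw [hsup]
  exact (mem_filter.mp hk).2

lemma le_bhKstar {p : Fin m → ℝ} {k : ℕ} (hk : k ≤ #{i | p i ≤ k * α / m}) :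
    k ≤ bhKstar m α p := by
  have hkm : k ≤ m := hk.trans ((card_filter_le _ _).trans (card_fin m).le)
  exact le_sup (f := id) (mem_filter.mpr ⟨mem_range.mpr (Nat.lt_succ_of_le hkm), hk⟩)

lemma bhKstar_eq_sup' (p : Fin m → ℝ) :
    bhKstar m α p = (range (m + 1)).sup' nonempty_range_add_one
      (fun k => if k ≤ #{i | p i ≤ k * α / m} then k else 0) := by
  rw [sup'_eq_sup, sup_ite, ← bot_eq_zero', sup_bot, sup_bot_eq]
  rfl

lemma measurable_card_filter_le (t : ℝ) : Measurable (fun p : Fin m → ℝ => #{i | p i ≤ t}) := by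
  simp_rw [card_filter]
  exact measurable_sum _ fun i _ =>
    Measurable.ite (measurableSet_le (measurable_pi_apply i) measurable_const)
      measurable_const measurable_const

lemma measurable_bhKstar : Measurable (bhKstar m α) := by
  simp_rw [funext bhKstar_eq_sup']
  exact measurable_range_sup'' fun k _ =>
    (measurable_from_top (f := fun n : ℕ => if k ≤ n then k else 0)).comp
      (measurable_card_filter_le _)

lemma filter_le_eq_of_forall_ne {ι : Type*} [Fintype ι] {p q : ι → ℝ} {i : ι}
    (hpq : ∀ j ≠ i, p j = q j) {t : ℝ} (hp : p i ≤ t) (hq : q i ≤ t) :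
    univ.filter (fun j => p j ≤ t) = univ.filter (fun j => q j ≤ t) := by
  ext j
  by_cases hj : j = i
  · simp [hj, hp, hq]
  · simp [hpq j hj]

lemma bhKstar_eq_of_forall_ne (hα : 0 ≤ α) {p q : Fin m → ℝ} {i : Fin m}
    (hpq : ∀ j ≠ i, p j = q j) (hp : p i ≤ bhKstar m α p * α / m)
    (hq : q i ≤ bhKstar m α p * α / m) :
    bhKstar m α q = bhKstar m α p := by
  set K := bhKstar m α p
  have hcard : ∀ k, K ≤ k → #{j | p j ≤ k * α / m} = #{j | q j ≤ k * α / m} := by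
    intro k hk
    have hKk : (K : ℝ) * α / m ≤ k * α / m := by gcongr
    rw [filter_le_eq_of_forall_ne hpq (hp.trans hKk) (hq.trans hKk)]
  refine le_antisymm ?_ (le_bhKstar ((bhKstar_le_card p).trans_eq (hcard K le_rfl)))
  by_contra! hlt
  exact hlt.not_ge (le_bhKstar ((bhKstar_le_card q).trans_eq (hcard _ hlt.le).symm))

end Cutoff

noncomputable def falseDiscoveryShare (c x : ℝ) (k : ℕ) : ℝ :=
  if x ≤ k * c then (max (k : ℝ) 1)⁻¹ else 0

lemma falseDiscoveryShare_bhKstar_update_zero {m : ℕ} {α : ℝ} (hα : 0 ≤ α) (p : Fin m → ℝ)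
    (i : Fin m) :
    falseDiscoveryShare (α / m) (p i) (bhKstar m α (Function.update p i 0)) =
      falseDiscoveryShare (α / m) (p i) (bhKstar m α p) := by
  set q := Function.update p i 0
  have hpq : ∀ j ≠ i, p j = q j := fun j hj => (Function.update_of_ne hj _ _).symm
  have hq0 : ∀ k : ℕ, q i ≤ k * α / m := fun k => by simp only [q, Function.update_self]; positivity
  simp only [falseDiscoveryShare, ← mul_div_assoc]
  by_cases hp : p i ≤ bhKstar m α p * α / m
  · rw [bhKstar_eq_of_forall_ne hα hpq hp (hq0 _)]
  by_cases hq : p i ≤ bhKstar m α q * α / m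
  · rw [← bhKstar_eq_of_forall_ne hα (fun j hj => (hpq j hj).symm) (hq0 _) hq] at hq
    exact absurd hq hp
  · rw [if_neg hp, if_neg hq]

lemma measurable_falseDiscoveryShare (c : ℝ) :
    Measurable (fun z : ℝ × ℕ => falseDiscoveryShare c z.1 z.2) :=
  measurable_from_prod_countable_left fun k =>
    Measurable.ite (measurableSet_Iic (a := k * c)) (measurable_const (a := (max (k : ℝ) 1)⁻¹))
      measurable_const

lemma falseDiscoveryShare_nonneg (c x : ℝ) (k : ℕ) : 0 ≤ falseDiscoveryShare c x k := by
  unfold falseDiscoveryShare; split_ifs <;> positivity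

lemma falseDiscoveryShare_le_one (c x : ℝ) (k : ℕ) : falseDiscoveryShare c x k ≤ 1 := by
  unfold falseDiscoveryShare
  split_ifs
  · exact inv_le_one_of_one_le₀ (le_max_right _ _)
  · exact zero_le_one

section Integral

variable {Ω : Type*} [MeasurableSpace Ω] {μ : Measure Ω}

lemma integrable_falseDiscoveryShare [IsFiniteMeasure μ] (c : ℝ) {X : Ω → ℝ} {S : Ω → ℕ}
    (hX : Measurable X) (hS : Measurable S) :
    Integrable (fun ω => falseDiscoveryShare c (X ω) (S ω)) μ :=
  Integrable.of_bound
    ((measurable_falseDiscoveryShare c).comp (hX.prodMk hS)).aestronglyMeasurable 1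
    (ae_of_all _ fun ω => by
      rw [Real.norm_of_nonneg (falseDiscoveryShare_nonneg _ _ _)]
      exact falseDiscoveryShare_le_one _ _ _)

lemma integral_falseDiscoveryShare_le_of_Iic_le {ν : Measure ℝ} [IsFiniteMeasure ν] {c : ℝ}
    (hc : 0 ≤ c) (hν : ∀ t, ν (Set.Iic t) ≤ ENNReal.ofReal t) (k : ℕ) :
    ∫ x, falseDiscoveryShare c x k ∂ν ≤ c := by
  have hmax : (0 : ℝ) < max (k : ℝ) 1 := lt_max_of_lt_right one_pos
  have hshare : (fun x => falseDiscoveryShare c x k) =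
      (Set.Iic (k * c)).indicator (fun _ => (max (k : ℝ) 1)⁻¹) := by
    ext x; simp [falseDiscoveryShare, Set.indicator_apply]
  rw [hshare, integral_indicator_const _ measurableSet_Iic, smul_eq_mul, ← div_eq_mul_inv,
    div_le_iff₀ hmax]
  calc ν.real (Set.Iic (k * c)) ≤ k * c :=
        ENNReal.toReal_le_of_le_ofReal (by positivity) (hν _)
    _ ≤ c * max (k : ℝ) 1 := by rw [mul_comm]; gcongr; exact le_max_left _ _

theorem integral_falseDiscoveryShare_le [IsProbabilityMeasure μ] {X : Ω → ℝ} {S : Ω → ℕ}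
    (hX : Measurable X) (hS : Measurable S) (hXS : IndepFun X S μ) {c : ℝ} (hc : 0 ≤ c)
    (hX_le : ∀ t, μ.map X (Set.Iic t) ≤ ENNReal.ofReal t) :
    ∫ ω, falseDiscoveryShare c (X ω) (S ω) ∂μ ≤ c := by
  have := Measure.isProbabilityMeasure_map (μ := μ) hX.aemeasurable
  have := Measure.isProbabilityMeasure_map (μ := μ) hS.aemeasurable
  calc ∫ ω, falseDiscoveryShare c (X ω) (S ω) ∂μ
      = ∫ z, falseDiscoveryShare c z.1 z.2 ∂(μ.map X).prod (μ.map S) := by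
        rw [← hXS.map_prod_eq_prod_map_map hX.aemeasurable hS.aemeasurable,
          integral_map (hX.prodMk hS).aemeasurable
            (measurable_falseDiscoveryShare c).aestronglyMeasurable]
    _ = ∫ k, ∫ x, falseDiscoveryShare c x k ∂μ.map X ∂μ.map S :=
        integral_prod_symm _ (integrable_falseDiscoveryShare c measurable_fst measurable_snd)
    _ ≤ ∫ _k, c ∂μ.map S :=
        integral_mono_of_nonneg (ae_of_all _ fun k => integral_nonneg fun x =>
            falseDiscoveryShare_nonneg _ _ _) (integrable_const c)
          (ae_of_all _ (integral_falseDiscoveryShare_le_of_Iic_le hc hX_le))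
    _ = c := by simp

end Integral

namespace ProbabilityTheory

variable {Ω : Type*} [MeasurableSpace Ω] {μ : Measure Ω}

lemma iIndepFun.indepFun_update [IsProbabilityMeasure μ] {ι β : Type*} [Fintype ι]
    [DecidableEq ι] [MeasurableSpace β] {X : ι → Ω → β} (h : iIndepFun X μ)
    (hX : ∀ i, Measurable (X i)) (i : ι) (b : β) :
    IndepFun (X i) (fun ω => Function.update (fun j => X j ω) i b) μ := by
  have hdisj : Disjoint ({i} : Finset ι) (univ.erase i) := by simp
  have h' := (h.indepFun_finset {i} (univ.erase i) hdisj hX).comp (_mγ := ‹_›)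
    (_mγ' := MeasurableSpace.pi)
    (φ := fun v => v ⟨i, mem_singleton_self i⟩)
    (ψ := fun v j => if hj : j = i then b else v ⟨j, mem_erase.mpr ⟨hj, mem_univ j⟩⟩)
    (measurable_pi_apply _)
    (measurable_pi_lambda _ fun j => by
      by_cases hj : j = i
      · simp only [hj, dite_true]; exact measurable_const
      · simp only [hj, dite_false]; exact measurable_pi_apply _)
  refine h'.congr (ae_of_all _ fun _ => rfl) (ae_of_all _ fun ω => funext fun j => ?_)
  by_cases hj : j = i <;> simp [hj]

lemma IndepFun.indepFun_comp_prodMk [IsFiniteMeasure μ] {β γ δ ε : Type*} [MeasurableSpace β]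
    [MeasurableSpace γ] [MeasurableSpace δ] [MeasurableSpace ε] {T : Ω → β} {Z : Ω → γ}
    {f : β → δ} {g : β → ε} (hT : Measurable T) (hZ : Measurable Z) (hf : Measurable f)
    (hg : Measurable g) (hTZ : IndepFun T Z μ) (hfg : IndepFun (f ∘ T) (g ∘ T) μ) :
    IndepFun (f ∘ T) (fun ω => (g (T ω), Z ω)) μ := by
  have hgZ : IndepFun (g ∘ T) Z μ := hTZ.comp hg measurable_id
  change IndepFun (f ∘ T) (fun ω => ((g ∘ T) ω, Z ω)) μ
  rw [indepFun_iff_map_prod_eq_prod_map_map (hf.comp hT).aemeasurable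
    ((hg.comp hT).prodMk hZ).aemeasurable, hgZ.map_prod_eq_prod_map_map (hg.comp hT).aemeasurable
    hZ.aemeasurable, ← Measure.prodAssoc_prod, ← hfg.map_prod_eq_prod_map_map
    (hf.comp hT).aemeasurable (hg.comp hT).aemeasurable]
  calc μ.map (fun ω => ((f ∘ T) ω, (g (T ω), Z ω)))
      = ((μ.map (fun ω => (T ω, Z ω))).map (Prod.map (fun t => (f t, g t)) id)).map
          MeasurableEquiv.prodAssoc := by
        rw [Measure.map_map (by fun_prop) (by fun_prop),
          Measure.map_map (by fun_prop) (by fun_prop)]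
        rfl
    _ = ((μ.map (fun ω => (f (T ω), g (T ω)))).prod (μ.map Z)).map
          MeasurableEquiv.prodAssoc := by
        rw [hTZ.map_prod_eq_prod_map_map hT.aemeasurable hZ.aemeasurable,
          ← Measure.map_prod_map _ _ (hf.prodMk hg) measurable_id,
          Measure.map_map (hf.prodMk hg) hT, Measure.map_id]
        rfl

lemma indepFun_update_of_iIndepFun_of_indepFun [IsProbabilityMeasure μ] {ι β : Type*} [Fintype ι]
    [DecidableEq ι] [MeasurableSpace β] {X : ι → Ω → β} (hX : ∀ i, Measurable (X i))
    {s : Finset ι} (hs : iIndepFun (fun i : {i // i ∈ s} => X i) μ)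
    (hsep : IndepFun (fun ω (i : {i // i ∈ s}) => X i ω) (fun ω (i : {i // i ∉ s}) => X i ω) μ)
    {i : ι} (hi : i ∈ s) (b : β) :
    IndepFun (X i) (fun ω => Function.update (fun j => X j ω) i b) μ := by
  have hsplit := IndepFun.indepFun_comp_prodMk (T := fun ω (j : {j // j ∈ s}) => X j ω)
    (Z := fun ω (j : {j // j ∉ s}) => X j ω) (f := fun t : {j // j ∈ s} → β => t ⟨i, hi⟩)
    (g := fun t : {j // j ∈ s} → β => Function.update t ⟨i, hi⟩ b)
    (measurable_pi_lambda _ fun j => hX j) (measurable_pi_lambda _ fun j => hX j)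
    (measurable_pi_apply _) measurable_update_left hsep
    (hs.indepFun_update (fun j => hX j) ⟨i, hi⟩ b)
  have h := hsplit.comp measurable_id
    (MeasurableEquiv.piEquivPiSubtypeProd (fun _ => β) (· ∈ s)).symm.measurable
  refine h.congr (ae_of_all _ fun _ => rfl) (ae_of_all _ fun ω => funext fun j => ?_)
  by_cases hj : j = i
  · subst hj
    simp [MeasurableEquiv.piEquivPiSubtypeProd, Equiv.piEquivPiSubtypeProd, hi]
  · by_cases hjs : j ∈ s <;>
      simp [MeasurableEquiv.piEquivPiSubtypeProd, Equiv.piEquivPiSubtypeProd, hj, hjs,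
        Subtype.ext_iff]

end ProbabilityTheory

lemma volume_restrict_Icc_Iic_le (t : ℝ) :
    volume.restrict (Set.Icc (0 : ℝ) 1) (Set.Iic t) ≤ ENNReal.ofReal t := by
  rw [Measure.restrict_apply measurableSet_Iic]
  calc volume (Set.Iic t ∩ Set.Icc 0 1) ≤ volume (Set.Icc 0 t) :=
        measure_mono fun x hx => ⟨hx.2.1, hx.1⟩
    _ = ENNReal.ofReal t := by rw [Real.volume_Icc, sub_zero]

theorem stmt4_general {Ω : Type*} [MeasurableSpace Ω] (μ : Measure Ω) [IsProbabilityMeasure μ]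
    (m : ℕ) (p : Fin m → Ω → ℝ) (hmeas : ∀ i, Measurable (p i))
    (trueNulls : Finset (Fin m)) (m₀ : ℕ) (hm₀ : m₀ = trueNulls.card)
    (hunif : ∀ i ∈ trueNulls, Measure.map (p i) μ = volume.restrict (Set.Icc (0 : ℝ) 1))
    (hnullindep : iIndepFun
      (fun i : {i : Fin m // i ∈ trueNulls} => p i) μ)
    (hsep : IndepFun (fun ω (i : {i : Fin m // i ∈ trueNulls}) => p i ω)
      (fun ω (i : {i : Fin m // i ∉ trueNulls}) => p i ω) μ)
    (α : ℝ) (hα0 : 0 ≤ α)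
    (R : Ω → ℕ) (hR : ∀ ω, R ω = bhKstar m α (fun i => p i ω))
    (V : Ω → ℕ)
    (hV : ∀ ω, V ω = (trueNulls.filter (fun i => p i ω ≤ (R ω : ℝ) * α / m)).card) :
    (∫ ω, (V ω : ℝ) / max (R ω : ℝ) 1 ∂μ) ≤ (m₀ : ℝ) / m * α := by
  classical
  have hP : Measurable fun ω i => p i ω := measurable_pi_lambda _ hmeas
  have hRmeas : Measurable R := funext hR ▸ measurable_bhKstar.comp hP
  have hFDP : ∀ ω, (V ω : ℝ) / max (R ω : ℝ) 1 =
      ∑ i ∈ trueNulls, falseDiscoveryShare (α / m) (p i ω) (R ω) := fun ω => by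
    rw [hV, natCast_card_filter, sum_div]
    refine sum_congr rfl fun i _ => ?_
    simp only [falseDiscoveryShare, mul_div_assoc, ite_div, one_div, zero_div]
  have hexchange : ∀ i ω, falseDiscoveryShare (α / m) (p i ω) (R ω) =
      falseDiscoveryShare (α / m) (p i ω) (bhKstar m α (Function.update (fun j => p j ω) i 0)) :=
    fun i ω => by
      rw [hR]
      exact (falseDiscoveryShare_bhKstar_update_zero hα0 (fun j => p j ω) i).symm
  calc ∫ ω, (V ω : ℝ) / max (R ω : ℝ) 1 ∂μ
      = ∑ i ∈ trueNulls, ∫ ω, falseDiscoveryShare (α / m) (p i ω) (R ω) ∂μ := by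
        simp_rw [hFDP]
        exact integral_finsetSum _ fun i _ => integrable_falseDiscoveryShare _ (hmeas i) hRmeas
    _ ≤ ∑ _i ∈ trueNulls, α / m := by
        refine sum_le_sum fun i hi => ?_
        simp_rw [hexchange i]
        exact integral_falseDiscoveryShare_le (hmeas i)
          (measurable_bhKstar.comp (measurable_update_left.comp hP))
          ((indepFun_update_of_iIndepFun_of_indepFun hmeas hnullindep hsep hi 0).comp
            measurable_id measurable_bhKstar)
          (by positivity) (fun t => hunif i hi ▸ volume_restrict_Icc_Iic_le t)
    _ = m₀ / m * α := by rw [sum_const, nsmul_eq_mul, hm₀]; ring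

/-- Benjamini–Hochberg (1995): with `m₀` true nulls out of `m`, whose p-values are
i.i.d. `Uniform[0,1]` and independent of the false-null p-values, the BH procedure
at level `α` (rejecting the `k*` smallest p-values, i.e. all `i` with
`p i ≤ k* α / m`) satisfies `FDR = E[V / max(R,1)] ≤ (m₀ / m) α`. -/
theorem stmt4 {Ω : Type*} [MeasurableSpace Ω] (μ : Measure Ω) [IsProbabilityMeasure μ]
    (m : ℕ) (hm : 0 < m) (p : Fin m → Ω → ℝ) (hmeas : ∀ i, Measurable (p i))
    (trueNulls : Finset (Fin m)) (m₀ : ℕ) (hm₀ : m₀ = trueNulls.card)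
    (hunif : ∀ i ∈ trueNulls, Measure.map (p i) μ = volume.restrict (Set.Icc (0 : ℝ) 1))
    (hnullindep : iIndepFun
      (fun i : {i : Fin m // i ∈ trueNulls} => p i) μ)
    (hsep : IndepFun (fun ω (i : {i : Fin m // i ∈ trueNulls}) => p i ω)
      (fun ω (i : {i : Fin m // i ∉ trueNulls}) => p i ω) μ)
    (α : ℝ) (hα0 : 0 ≤ α) (hα1 : α ≤ 1)
    (R : Ω → ℕ) (hR : ∀ ω, R ω = bhKstar m α (fun i => p i ω))
    (V : Ω → ℕ)
    (hV : ∀ ω, V ω = (trueNulls.filter (fun i => p i ω ≤ (R ω : ℝ) * α / m)).card) :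
    (∫ ω, (V ω : ℝ) / max (R ω : ℝ) 1 ∂μ) ≤ (m₀ : ℝ) / m * α :=
  stmt4_general μ m p hmeas trueNulls m₀ hm₀ hunif hnullindep hsep α hα0 R hR V hV
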